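/- If [S,T] is a new interval of Tam_n with n ≥ 1, then there exist binary trees S1 and T1 in Tam_{n−1} such that S = Y∘_1 S1 and T = Y∘_2 T1, where Y is the unique binary tree of size 1. -/

import Mathlib

/-- Planar binary trees. -/
inductive BT : Type
  | leaf : BT
  | node : BT → BT → BT
deriving DecidableEq

namespace BT

/-- Number of internal vertices. -/
def size : BT → ℕ
  | leaf => 0
  | node l r => l.size + r.size + 1

/-- One left rotation somewhere in the tree (covering relation of the Tamari lattice). -/
inductive Rot : BT → BT → Prop
  | root (a b c : BT) : Rot (node (node a b) c) (node a (node b c))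
  | left {l l' : BT} (r : BT) : Rot l l' → Rot (node l r) (node l' r)
  | right (l : BT) {r r' : BT} : Rot r r' → Rot (node l r) (node l r')

/-- The Tamari order: reflexive transitive closure of left rotations. -/
def tamariLE (S T : BT) : Prop := Relation.ReflTransGen Rot S T

/-- The partial order induced by a binary tree on `{1,…,size}` via in-order labelling:
`rel T i j` iff the vertex labelled `i` lies in the subtree rooted at the vertex labelled `j`. -/
def rel : BT → ℕ → ℕ → Prop
  | leaf, _, _ => False
  | node l r, i, j =>
      (j = l.size + 1 ∧ 1 ≤ i ∧ i ≤ l.size + r.size + 1) ∨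
      rel l i j ∨
      (∃ i' j', rel r i' j' ∧ i = i' + l.size + 1 ∧ j = j' + l.size + 1)

/-- Decreasing relations of a tree: pairs `(c, a)` with `a < c` and `c ◁ a`. -/
def Dec (T : BT) : Set (ℕ × ℕ) := {p | p.2 < p.1 ∧ T.rel p.1 p.2}

/-- Increasing relations of a tree: pairs `(a, c)` with `a < c` and `a ◁ c`. -/
def Inc (T : BT) : Set (ℕ × ℕ) := {p | p.1 < p.2 ∧ T.rel p.1 p.2}

/-- Left/right mirror image of a planar binary tree. -/
def mirror : BT → BT
  | leaf => leaf
  | node l r => node r.mirror l.mirror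

/-- In-order label of the root (0 for the empty tree). -/
def rootLabel : BT → ℕ
  | leaf => 0
  | node l _ => l.size + 1

/-- `rcRel T i j` iff, under in-order labelling, the vertex `j` is the right child of vertex `i`. -/
def rcRel : BT → ℕ → ℕ → Prop
  | leaf, _, _ => False
  | node l r, i, j =>
      (i = l.size + 1 ∧ r ≠ leaf ∧ j = l.size + 1 + r.rootLabel) ∨
      rcRel l i j ∨
      (∃ i' j', rcRel r i' j' ∧ i = i' + l.size + 1 ∧ j = j' + l.size + 1)

/-- `graft T i S` grafts the root of `S` on the `i`-th leaf of `T` (leaves numbered 1,…,size+1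
from left to right). -/
def graft : BT → ℕ → BT → BT
  | leaf, _, S => S
  | node l r, i, S =>
      if i ≤ l.size + 1 then node (l.graft i S) r
      else node l (r.graft (i - (l.size + 1)) S)

end BT

/-- An interval-poset of size `n`: a partial order on `{1,…,n}` (encoded as a relation on `ℕ`
supported and reflexive on `{1,…,n}`) satisfying the two interval-poset conditions. -/
def IsIntervalPoset (n : ℕ) (r : ℕ → ℕ → Prop) : Prop :=
  (∀ a b, r a b → 1 ≤ a ∧ a ≤ n ∧ 1 ≤ b ∧ b ≤ n) ∧
  (∀ a, 1 ≤ a → a ≤ n → r a a) ∧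
  (∀ a b c, r a b → r b c → r a c) ∧
  (∀ a b, r a b → r b a → a = b) ∧
  (∀ a b c, a < b → b < c → r a c → r b c) ∧
  (∀ a b c, a < b → b < c → r c a → r c b)

/-- The Châtel–Pons interval-poset of an interval `[S,T]`: reflexivity together with the
decreasing relations of `S` and the increasing relations of `T`. -/
def ipOf (S T : BT) : ℕ → ℕ → Prop := fun a b =>
  (a = b ∧ 1 ≤ a ∧ a ≤ S.size) ∨ (b < a ∧ S.rel a b) ∨ (a < b ∧ T.rel a b)

/-- `HasseCov r a b`: the relation `a ◁ b` is a cover relation (an edge `a → b` of the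
Hasse diagram) of the poset `r`. -/
def HasseCov (r : ℕ → ℕ → Prop) (a b : ℕ) : Prop :=
  r a b ∧ a ≠ b ∧ ∀ c, r a c → r c b → c = a ∨ c = b

/-- An exceptional interval-poset: the Hasse diagram contains no configuration
`y → x`, `y → z` with `x < y < z`. -/
def IsExceptional (n : ℕ) (r : ℕ → ℕ → Prop) : Prop :=
  IsIntervalPoset n r ∧
  ¬∃ x y z, x < y ∧ y < z ∧ HasseCov r y x ∧ HasseCov r y z

/-- A noncrossing tree in the based regular `(n+1)`-gon, with vertices `0,…,n`:
a spanning tree whose edges pairwise do not cross. Boundary edge `i` (for `1 ≤ i ≤ n`)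
joins vertices `i-1` and `i`; the base joins vertices `0` and `n`. -/
def IsNCTree (n : ℕ) (G : SimpleGraph (Fin (n + 1))) : Prop :=
  G.IsTree ∧
  ∀ a b c d : Fin (n + 1), G.Adj a b → G.Adj c d →
    ¬((a : ℕ) < c ∧ (c : ℕ) < b ∧ (b : ℕ) < d)

/-- Adjacency in a graph on `Fin (n+1)`, read on natural numbers. -/
def adjN (n : ℕ) (G : SimpleGraph (Fin (n + 1))) (a b : ℕ) : Prop :=
  ∃ (ha : a < n + 1) (hb : b < n + 1), G.Adj ⟨a, ha⟩ ⟨b, hb⟩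

/-- `EdgeLabel n G a b i`: the edge of the noncrossing tree `G` joining vertices `a < b`
carries the label `i`, i.e. it separates boundary edge `i` from the base and `i` is either
the edge itself (boundary case) or an open boundary edge. -/
def EdgeLabel (n : ℕ) (G : SimpleGraph (Fin (n + 1))) (a b i : ℕ) : Prop :=
  a < b ∧ b ≤ n ∧ adjN n G a b ∧ a < i ∧ i ≤ b ∧ (b = a + 1 ∨ ¬adjN n G (i - 1) i)

/-- The relation `◁_T` induced by a noncrossing tree: `i ◁ j` iff the edge labelled `i`
is separated from the base by the edge labelled `j` (plus reflexivity on `{1,…,n}`). -/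
def ncRel (n : ℕ) (G : SimpleGraph (Fin (n + 1))) : ℕ → ℕ → Prop := fun i j =>
  (i = j ∧ 1 ≤ i ∧ i ≤ n) ∨
  ∃ a b c d, EdgeLabel n G a b i ∧ EdgeLabel n G c d j ∧ c ≤ a ∧ b ≤ d ∧ ¬(a = c ∧ b = d)

/-- The graph `T_P` associated to an interval-poset `P`: for each `v`, an edge from the left
side of `min {x | x ◁ v}` (vertex `min − 1`) to the right side of `max {x | x ◁ v}`. -/
noncomputable def graphOf (n : ℕ) (r : ℕ → ℕ → Prop) : SimpleGraph (Fin (n + 1)) :=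
  SimpleGraph.fromRel (fun a b =>
    ∃ v, 1 ≤ v ∧ v ≤ n ∧ (a : ℕ) + 1 = sInf {x | r x v} ∧ (b : ℕ) = sSup {x | r x v})

/-- The partition `π_T` of a binary tree, as an equivalence-type relation: the finest
partition in which every vertex and its right child lie in the same block. -/
def sameBlock (T : BT) : ℕ → ℕ → Prop :=
  Relation.EqvGen (fun a b => T.rcRel a b ∨ T.rcRel b a)

/-- A relation (thought of as "same block of a partition") is noncrossing. -/
def IsNoncrossingRel (r : ℕ → ℕ → Prop) : Prop :=
  ¬∃ i j k l, i < j ∧ j < k ∧ k < l ∧ r i k ∧ r j l ∧ ¬r i j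

/-- The partition `π_T` of `{1,…,n}` associated to a binary tree, restricted to its support. -/
def partOf (T : BT) : ℕ → ℕ → Prop := fun a b =>
  sameBlock T a b ∧ 1 ≤ a ∧ a ≤ T.size ∧ 1 ≤ b ∧ b ≤ T.size

/-- A noncrossing partition of `{1,…,n}`, encoded as its "same block" equivalence relation. -/
def NCPartition (n : ℕ) (r : ℕ → ℕ → Prop) : Prop :=
  (∀ a b, r a b → 1 ≤ a ∧ a ≤ n ∧ 1 ≤ b ∧ b ≤ n) ∧
  (∀ a, 1 ≤ a → a ≤ n → r a a) ∧
  (∀ a b, r a b → r b a) ∧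
  (∀ a b c, r a b → r b c → r a c) ∧
  IsNoncrossingRel r

/-- `SubtreeAt S i j A`: `A` is a (nonempty) subtree of `S` rooted at an internal vertex,
whose leaves are the leaves `i,…,j` of `S`. -/
def SubtreeAt : BT → ℕ → ℕ → BT → Prop
  | .leaf, _, _, _ => False
  | .node l r, i, j, A =>
      (A = .node l r ∧ i = 1 ∧ j = (BT.node l r).size + 1) ∨
      SubtreeAt l i j A ∨
      (∃ i' j', SubtreeAt r i' j' A ∧ i = i' + l.size + 1 ∧ j = j' + l.size + 1)

/-- A new interval of `Tam n`: an interval that cannot be obtained as the grafting of two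
intervals of smaller sizes. -/
def IsNewInterval (n : ℕ) (S T : BT) : Prop :=
  S.size = n ∧ T.size = n ∧ BT.tamariLE S T ∧
  ¬∃ (S1 T1 S2 T2 : BT) (i : ℕ),
      S1.size = T1.size ∧ S2.size = T2.size ∧ S1.size < n ∧ S2.size < n ∧
      BT.tamariLE S1 T1 ∧ BT.tamariLE S2 T2 ∧ 1 ≤ i ∧ i ≤ S1.size + 1 ∧
      S = S1.graft i S2 ∧ T = T1.graft i T2

/-- The rise of a relation of size `n`: keep the decreasing relations, shift the increasing
relations by `+1`, on the ground set `{1,…,n+1}`. -/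
def riseRel (n : ℕ) (r : ℕ → ℕ → Prop) : ℕ → ℕ → Prop := fun a b =>
  (a = b ∧ 1 ≤ a ∧ a ≤ n + 1) ∨ (b < a ∧ r a b) ∨ (a < b ∧ 2 ≤ a ∧ r (a - 1) (b - 1))

/-- A relation is modern: no configuration `x ◁ y` and `z ◁ y` with `x < y < z`. -/
def ModernRel (r : ℕ → ℕ → Prop) : Prop :=
  ¬∃ x y z, x < y ∧ y < z ∧ r x y ∧ r z y

/-- A new interval-poset of size `m`: no increasing relation starting at `1`, no decreasing
relation starting at `m`, and no pair of relations `i+1 ◁ j+1` and `j ◁ i` with `i < j`. -/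
def NewIP (m : ℕ) (r : ℕ → ℕ → Prop) : Prop :=
  IsIntervalPoset m r ∧
  (¬∃ y, 1 < y ∧ r 1 y) ∧
  (¬∃ x, x < m ∧ r m x) ∧
  ¬∃ i j, i < j ∧ r (i + 1) (j + 1) ∧ r j i

/-- The fall of a relation of size `m`: keep the decreasing relations, shift the increasing
relations by `−1`, on the ground set `{1,…,m−1}`. -/
def fallRel (m : ℕ) (r : ℕ → ℕ → Prop) : ℕ → ℕ → Prop := fun a b =>
  (a = b ∧ 1 ≤ a ∧ a ≤ m - 1) ∨ (b < a ∧ r a b) ∨ (a < b ∧ r (a + 1) (b + 1))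

/-- Iterated rise: `riseIter n r k` is the `k`-th rise of a relation of size `n`. -/
def riseIter (n : ℕ) (r : ℕ → ℕ → Prop) : ℕ → (ℕ → ℕ → Prop)
  | 0 => r
  | k + 1 => riseRel (n + k) (riseIter n r k)

/-- An infinitely modern relation: no configuration `w ◁ x` and `z ◁ y` with `w < x < y < z`. -/
def InfModernRel (r : ℕ → ℕ → Prop) : Prop :=
  ¬∃ w x y z, w < x ∧ x < y ∧ y < z ∧ r w x ∧ r z y

open Classical in
/-- `irStat n r`: the smallest `k` with an increasing relation `k ◁ k+1`, and `n` if none. -/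
noncomputable def irStat (n : ℕ) (r : ℕ → ℕ → Prop) : ℕ :=
  if ∃ k, r k (k + 1) then sInf {k | r k (k + 1)} else n

open Classical in
/-- `drStat n r`: the largest `i` with a decreasing relation `i ◁ i−1`, and `1` if none. -/
noncomputable def drStat (n : ℕ) (r : ℕ → ℕ → Prop) : ℕ :=
  if ∃ i, 2 ≤ i ∧ r i (i - 1) then sSup {i | 2 ≤ i ∧ r i (i - 1)} else 1

/-! Both shape constraints come from splitting off a grafted factor. If the left subtree `T₀` of `T`
is not a leaf, then `T` is `T₀` grafted on the first leaf of `node leaf T₁`; decompositions at the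
leftmost leaf are inherited by every tree below in the Tamari order, so `[S,T]` would be such a
grafting of two smaller intervals. Dually (by mirror symmetry, which reverses the Tamari order),
decompositions at the rightmost leaf are inherited upwards, which forces the right subtree of `S`
to be a leaf. -/

namespace BT

def graftLeftmost : BT → BT → BT
  | leaf, S => S
  | node l r, S => node (graftLeftmost l S) r

def graftRightmost : BT → BT → BT
  | leaf, S => S
  | node l r, S => node l (graftRightmost r S)

lemma graft_one_eq_graftLeftmost (T S : BT) : T.graft 1 S = T.graftLeftmost S := by
  induction T with
  | leaf => rfl
  | node l r ihl => simp [graft, graftLeftmost, ihl]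

lemma graft_size_add_one_eq_graftRightmost (T S : BT) :
    T.graft (T.size + 1) S = T.graftRightmost S := by
  induction T with
  | leaf => rfl
  | node l r _ ihr =>
    have hi : (node l r).size + 1 - (l.size + 1) = r.size + 1 := by simp only [size]; omega
    rw [graft, if_neg (by simp only [size]; omega), hi, ihr]
    rfl

lemma size_graft (T : BT) (i : ℕ) (S : BT) : (T.graft i S).size = T.size + S.size := by
  induction T generalizing i with
  | leaf => simp [graft, size]
  | node l r ihl ihr => unfold graft; split_ifs <;> simp only [size, ihl, ihr] <;> omega

lemma size_eq_zero_iff {T : BT} : T.size = 0 ↔ T = leaf := by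
  cases T <;> simp [size]

lemma Rot.size_eq {P Q : BT} (h : Rot P Q) : P.size = Q.size := by
  induction h <;> simp only [size] <;> omega

lemma tamariLE.size_eq {P Q : BT} (h : tamariLE P Q) : P.size = Q.size := by
  induction h with
  | refl => rfl
  | tail _ step ih => exact ih.trans step.size_eq

lemma tamariLE_node_left {l l' : BT} (h : tamariLE l l') (r : BT) :
    tamariLE (node l r) (node l' r) :=
  h.lift (fun l => node l r) fun _ _ => Rot.left r

lemma exists_graftLeftmost_of_rot {P V W : BT} (h : Rot P (V.graftLeftmost W)) :
    ∃ V' W', P = V'.graftLeftmost W' ∧ tamariLE V' V ∧ tamariLE W' W := by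
  induction V generalizing P with
  | leaf => exact ⟨leaf, P, rfl, .refl, .single h⟩
  | node Vl Vr ih =>
    change Rot P (node (Vl.graftLeftmost W) Vr) at h
    cases h with
    | root _ b c => exact ⟨node (node Vl b) c, W, rfl, .single (Rot.root Vl b c), .refl⟩
    | left _ hl =>
      obtain ⟨V', W', rfl, hV, hW⟩ := ih hl
      exact ⟨node V' Vr, W', rfl, tamariLE_node_left hV Vr, hW⟩
    | right _ hr => exact ⟨node Vl _, W, rfl, .single (Rot.right Vl hr), .refl⟩

lemma exists_graftLeftmost_of_tamariLE {P V W : BT} (h : tamariLE P (V.graftLeftmost W)) :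
    ∃ V' W', P = V'.graftLeftmost W' ∧ tamariLE V' V ∧ tamariLE W' W := by
  induction h using Relation.ReflTransGen.head_induction_on with
  | refl => exact ⟨V, W, rfl, .refl, .refl⟩
  | head step _ ih =>
    obtain ⟨V₁, W₁, rfl, hV₁, hW₁⟩ := ih
    obtain ⟨V', W', rfl, hV', hW'⟩ := exists_graftLeftmost_of_rot step
    exact ⟨V', W', rfl, hV'.trans hV₁, hW'.trans hW₁⟩

@[simp]
lemma mirror_mirror (T : BT) : T.mirror.mirror = T := by
  induction T <;> simp_all [mirror]

lemma mirror_graftLeftmost (V W : BT) :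
    (V.graftLeftmost W).mirror = V.mirror.graftRightmost W.mirror := by
  induction V <;> simp_all [mirror, graftRightmost, graftLeftmost]

lemma mirror_graftRightmost (V W : BT) :
    (V.graftRightmost W).mirror = V.mirror.graftLeftmost W.mirror := by
  induction V <;> simp_all [mirror, graftRightmost, graftLeftmost]

lemma Rot.mirror {P Q : BT} (h : Rot P Q) : Rot Q.mirror P.mirror := by
  induction h with
  | root a b c => exact Rot.root c.mirror b.mirror a.mirror
  | left r _ ih => exact Rot.right r.mirror ih
  | right l _ ih => exact Rot.left l.mirror ih

lemma tamariLE.mirror {P Q : BT} (h : tamariLE P Q) : tamariLE Q.mirror P.mirror :=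
  Relation.reflTransGen_swap.mp
    (Relation.ReflTransGen.lift (p := Function.swap Rot) BT.mirror (fun _ _ => Rot.mirror) _ _ h)

lemma exists_graftRightmost_of_tamariLE {Q V W : BT} (h : tamariLE (V.graftRightmost W) Q) :
    ∃ V' W', Q = V'.graftRightmost W' ∧ tamariLE V V' ∧ tamariLE W W' := by
  have h' := h.mirror
  rw [mirror_graftRightmost] at h'
  obtain ⟨V', W', hQ, hV, hW⟩ := exists_graftLeftmost_of_tamariLE h'
  refine ⟨V'.mirror, W'.mirror, ?_, by simpa using hV.mirror, by simpa using hW.mirror⟩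
  rw [← mirror_mirror Q, hQ, mirror_graftLeftmost]

end BT

open BT

lemma IsNewInterval.eq_leaf_or_eq_leaf_of_graft {n i : ℕ} {S₁ T₁ S₂ T₂ : BT}
    (h : IsNewInterval n (S₁.graft i S₂) (T₁.graft i T₂)) (h₁ : tamariLE S₁ T₁)
    (h₂ : tamariLE S₂ T₂) (hi₁ : 1 ≤ i) (hi₂ : i ≤ S₁.size + 1) :
    S₁ = leaf ∨ S₂ = leaf := by
  obtain ⟨hS, -, -, hnew⟩ := h
  by_contra! hne
  have hS₁ : 0 < S₁.size := Nat.pos_of_ne_zero (size_eq_zero_iff.not.mpr hne.1)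
  have hS₂ : 0 < S₂.size := Nat.pos_of_ne_zero (size_eq_zero_iff.not.mpr hne.2)
  rw [size_graft] at hS
  exact hnew ⟨S₁, T₁, S₂, T₂, i, h₁.size_eq, h₂.size_eq, by omega, by omega, h₁, h₂, hi₁, hi₂,
    rfl, rfl⟩

lemma IsNewInterval.left_eq_leaf {n : ℕ} {S Tl Tr : BT} (h : IsNewInterval n S (node Tl Tr)) :
    Tl = leaf := by
  have hT : node Tl Tr = (node leaf Tr).graftLeftmost Tl := rfl
  obtain ⟨V, W, rfl, hV, hW⟩ := exists_graftLeftmost_of_tamariLE (hT ▸ h.2.2.1)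
  rw [hT, ← graft_one_eq_graftLeftmost, ← graft_one_eq_graftLeftmost] at h
  rcases h.eq_leaf_or_eq_leaf_of_graft hV hW le_rfl (by omega) with rfl | rfl
  · simpa [size] using hV.size_eq
  · exact size_eq_zero_iff.mp (by simpa [size] using hW.size_eq.symm)

lemma IsNewInterval.right_eq_leaf {n : ℕ} {Sl Sr T : BT} (h : IsNewInterval n (node Sl Sr) T) :
    Sr = leaf := by
  have hS : node Sl Sr = (node Sl leaf).graftRightmost Sr := rfl
  obtain ⟨V, W, rfl, hV, hW⟩ := exists_graftRightmost_of_tamariLE (hS ▸ h.2.2.1)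
  rw [hS, ← graft_size_add_one_eq_graftRightmost, ← graft_size_add_one_eq_graftRightmost,
    ← hV.size_eq] at h
  rcases h.eq_leaf_or_eq_leaf_of_graft hV hW (by omega) le_rfl with h | rfl
  · cases h
  · rfl

/-- a new interval `[S,T]` of `Tam n`, `n ≥ 1`, has the shape `S = Y∘₁S1`,
`T = Y∘₂T1` for trees `S1, T1` of size `n−1`, where `Y` is the binary tree of size 1. -/
theorem new_interval_shape (n : ℕ) (hn : 1 ≤ n) (S T : BT)
    (h : IsNewInterval n S T) :
    ∃ S1 T1 : BT, S1.size = n - 1 ∧ T1.size = n - 1 ∧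
      S = (BT.node .leaf .leaf).graft 1 S1 ∧ T = (BT.node .leaf .leaf).graft 2 T1 := by
  obtain _ | ⟨Sl, Sr⟩ := S
  · simp [size, ← h.1] at hn
  obtain _ | ⟨Tl, Tr⟩ := T
  · simp [size, ← h.2.1] at hn
  obtain rfl := h.right_eq_leaf
  obtain rfl := h.left_eq_leaf
  obtain ⟨hSn, hTn, -⟩ := h
  refine ⟨Sl, Tr, ?_, ?_, by simp [graft], by simp [graft, size]⟩ <;> simp only [size] at * <;> omega
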